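/- (Error bound for approximate block prox points.) For s ∈ {1,…,b}, x ∈ X_s, g ∈ ℝ^{n_s}, α > 0 and δ > 0, let P_s(x, g, α) = argmin_{y∈X_s}{⟨g, y⟩ + (1/α)D_{φ_s}(y, x) + χ_s(y)}, and let P_s^δ(x, g, α) ∈ X_s be any point satisfying ⟨g + (1/α)[∇φ_s(P_s^δ(x,g,α)) − ∇φ_s(x)], u − P_s^δ(x,g,α)⟩ + χ_s(u) − χ_s(P_s^δ(x,g,α)) ≥ −δ for all u ∈ X_s. Then ‖P_s(x,g,α) − P_s^δ(x,g,α)‖² ≤ α·δ. -/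

import Mathlib

/-! The prox objective `F = ⟪g, ·⟫ + (1/α) D_φ(·, x) + χ` is `(1/α)`-strongly convex, so at its
minimiser `pex` over `Xs` it grows quadratically: `F pex + ‖pex - pδ‖² / (2α) ≤ F pδ`.
Conversely, the gradient inequality of the strongly convex `φ` turns the `δ`-approximate variational
inequality at `pδ`, tested at `u = pex`, into `F pδ + ‖pex - pδ‖² / (2α) - δ ≤ F pex`.
Adding the two bounds gives `‖pex - pδ‖² / α ≤ δ`. -/

open scoped RealInnerProductSpace

noncomputable section

open Filter Set Topology

namespace StrongConvexOn

variable {E : Type*} [NormedAddCommGroup E] [InnerProductSpace ℝ E]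
  {s : Set E} {f g : E → ℝ} {m : ℝ} {x y : E}

lemma subset {t : Set E} (hf : StrongConvexOn t m f) (hst : s ⊆ t) (hs : Convex ℝ s) :
    StrongConvexOn s m f :=
  ⟨hs, fun _ hx _ hy _ _ ha hb hab => hf.2 (hst hx) (hst hy) ha hb hab⟩

lemma const_mul (hf : StrongConvexOn s m f) {c : ℝ} (hc : 0 ≤ c) :
    StrongConvexOn s (c * m) fun y => c * f y := by
  refine ⟨hf.1, fun u hu v hv a b ha hb hab => ?_⟩
  have h := mul_le_mul_of_nonneg_left (hf.2 hu hv ha hb hab) hc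
  simp only [smul_eq_mul] at h ⊢
  linarith

lemma add_convexOn (hf : StrongConvexOn s m f) (hg : ConvexOn ℝ s g) :
    StrongConvexOn s m (f + g) := by
  simpa [StrongConvexOn] using UniformConvexOn.add hf (uniformConvexOn_zero.mpr hg)

lemma apply_add_smul_sub_le (hf : StrongConvexOn s m f) (hx : x ∈ s) (hy : y ∈ s)
    {t : ℝ} (ht₀ : 0 ≤ t) (ht₁ : t ≤ 1) :
    f (x + t • (y - x)) ≤ f x + t * (f y - f x - m / 2 * (1 - t) * ‖y - x‖ ^ 2) := by
  have h := hf.2 hx hy (sub_nonneg.mpr ht₁) ht₀ (sub_add_cancel 1 t)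
  rw [show (1 - t) • x + t • y = x + t • (y - x) by module, norm_sub_rev] at h
  simp only [smul_eq_mul] at h
  linarith

lemma add_mul_sq_norm_sub_le_of_isMinOn (hf : StrongConvexOn s m f) (hmin : IsMinOn f s x)
    (hx : x ∈ s) (hy : y ∈ s) : f x + m / 2 * ‖y - x‖ ^ 2 ≤ f y := by
  have hlim : Tendsto (fun t : ℝ => f x + m / 2 * (1 - t) * ‖y - x‖ ^ 2) (𝓝[>] 0)
      (𝓝 (f x + m / 2 * ‖y - x‖ ^ 2)) := by
    refine (Continuous.tendsto' ?_ 0 _ (by ring)).mono_left nhdsWithin_le_nhds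
    fun_prop
  refine le_of_tendsto hlim ?_
  filter_upwards [Ioo_mem_nhdsGT one_pos] with t ⟨ht₀, ht₁⟩
  have hmem : x + t • (y - x) ∈ s := hf.1.add_smul_sub_mem hx hy ⟨ht₀.le, ht₁.le⟩
  have h := (isMinOn_iff.mp hmin _ hmem).trans (hf.apply_add_smul_sub_le hx hy ht₀.le ht₁.le)
  nlinarith

variable [CompleteSpace E]

lemma add_inner_add_le_of_hasGradientAt (hf : StrongConvexOn s m f) {f' : E}
    (hgrad : HasGradientAt f f' x) (hx : x ∈ s) (hy : y ∈ s) :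
    f x + ⟪f', y - x⟫ + m / 2 * ‖y - x‖ ^ 2 ≤ f y := by
  have hslope := (hgrad.hasFDerivAt.hasLineDerivAt (y - x)).tendsto_slope_zero_right
  have hlim : Tendsto (fun t : ℝ => f y - f x - m / 2 * (1 - t) * ‖y - x‖ ^ 2) (𝓝[>] 0)
      (𝓝 (f y - f x - m / 2 * ‖y - x‖ ^ 2)) := by
    refine (Continuous.tendsto' ?_ 0 _ (by ring)).mono_left nhdsWithin_le_nhds
    fun_prop
  have h := le_of_tendsto_of_tendsto hslope hlim ?_
  · simp only [InnerProductSpace.toDual_apply_apply] at h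
    linarith
  filter_upwards [Ioo_mem_nhdsGT one_pos] with t ⟨ht₀, ht₁⟩
  rw [smul_eq_mul, inv_mul_le_iff₀ ht₀]
  linarith [hf.apply_add_smul_sub_le hx hy ht₀.le ht₁.le]

end StrongConvexOn

section Prox

variable {E : Type*} [NormedAddCommGroup E] [InnerProductSpace ℝ E] [CompleteSpace E]
  {s : Set E} {φ χ : E → ℝ} {μ α δ : ℝ} {x g p u : E}

def bregmanDiv (φ : E → ℝ) (y x : E) : ℝ := φ y - φ x - ⟪gradient φ x, y - x⟫

def proxObjective (φ χ : E → ℝ) (x g : E) (α : ℝ) (y : E) : ℝ :=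
  ⟪g, y⟫ + (1 / α) * bregmanDiv φ y x + χ y

lemma proxObjective_strongConvexOn (hφ : StrongConvexOn s μ φ) (hχ : ConvexOn ℝ s χ)
    (hα : 0 ≤ α) : StrongConvexOn s (1 / α * μ) (proxObjective φ χ x g α) := by
  set c := 1 / α
  have hsplit : proxObjective φ χ x g α = (fun y => c * φ y)
      + ((fun y => ⟪g - c • gradient φ x, y⟫ + c * (⟪gradient φ x, x⟫ - φ x)) + χ) := by
    ext y
    simp only [proxObjective, bregmanDiv, Pi.add_apply, inner_sub_left, inner_sub_right,
      real_inner_smul_left]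
    ring
  rw [hsplit]
  exact (hφ.const_mul (by positivity)).add_convexOn
    ((((innerₛₗ ℝ (g - c • gradient φ x)).convexOn hφ.1).add_const _).add hχ)

lemma proxObjective_add_le_of_approxVI (hφ : StrongConvexOn s μ φ)
    (hφd : DifferentiableAt ℝ φ p) (hp : p ∈ s) (hu : u ∈ s) (hα : 0 ≤ α)
    (hVI : ⟪g + (1 / α) • (gradient φ p - gradient φ x), u - p⟫ + χ u - χ p ≥ -δ) :
    proxObjective φ χ x g α p + 1 / α * μ / 2 * ‖u - p‖ ^ 2 - δ
      ≤ proxObjective φ χ x g α u := by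
  have hD := mul_le_mul_of_nonneg_left
    (hφ.add_inner_add_le_of_hasGradientAt hφd.hasGradientAt hp hu) (by positivity : 0 ≤ 1 / α)
  simp only [proxObjective, bregmanDiv, inner_add_left, inner_sub_left, inner_sub_right,
    real_inner_smul_left] at hVI hD ⊢
  linarith

end Prox

theorem statement18_general {m : ℕ}
    (Xs : Set (EuclideanSpace ℝ (Fin m))) (hXsc : Convex ℝ Xs)
    (χ : EuclideanSpace ℝ (Fin m) → ℝ) (hχ : ConvexOn ℝ Set.univ χ)
    (φ : EuclideanSpace ℝ (Fin m) → ℝ) (hφd : Differentiable ℝ φ)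
    (hφsc : StrongConvexOn Set.univ 1 φ)
    (x : EuclideanSpace ℝ (Fin m))
    (g : EuclideanSpace ℝ (Fin m)) (α δ : ℝ) (hα : 0 < α)
    (pex : EuclideanSpace ℝ (Fin m)) (hpexXs : pex ∈ Xs)
    (hpexmin : ∀ y ∈ Xs,
      ⟪g, pex⟫ + (1 / α) * (φ pex - φ x - ⟪gradient φ x, pex - x⟫) + χ pex
        ≤ ⟪g, y⟫ + (1 / α) * (φ y - φ x - ⟪gradient φ x, y - x⟫) + χ y)
    (pδ : EuclideanSpace ℝ (Fin m)) (hpδXs : pδ ∈ Xs)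
    (hpδ : ∀ u ∈ Xs,
      ⟪g + (1 / α) • (gradient φ pδ - gradient φ x), u - pδ⟫ + χ u - χ pδ ≥ -δ) :
    ‖pex - pδ‖ ^ 2 ≤ α * δ := by
  have hF : StrongConvexOn Xs (1 / α * 1) (proxObjective φ χ x g α) :=
    proxObjective_strongConvexOn (hφsc.subset (subset_univ _) hXsc)
      (hχ.subset (subset_univ _) hXsc) hα.le
  have hlower := hF.add_mul_sq_norm_sub_le_of_isMinOn (isMinOn_iff.mpr hpexmin) hpexXs hpδXs
  have hupper := proxObjective_add_le_of_approxVI hφsc (hφd pδ) (mem_univ pδ) (mem_univ pex)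
    hα.le (hpδ pex hpexXs)
  rw [norm_sub_rev] at hlower
  have h : 1 / α * ‖pex - pδ‖ ^ 2 ≤ δ := by linarith
  rwa [one_div, inv_mul_le_iff₀ hα] at h

/-- Error bound for approximate block prox points, stated for a generic
block `s`.  If `pex = P_s(x, g, α)` is the exact prox point (a minimizer over `X_s` of
`y ↦ ⟨g,y⟩ + (1/α)D_{φ}(y,x) + χ(y)`) and `pδ ∈ X_s` satisfies the `δ`-approximate
variational inequality
`⟨g + (1/α)[∇φ(pδ) − ∇φ(x)], u − pδ⟩ + χ(u) − χ(pδ) ≥ −δ` for all `u ∈ X_s`,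
then `‖pex − pδ‖² ≤ α·δ`. -/
theorem statement18 {m : ℕ}
    (Xs : Set (EuclideanSpace ℝ (Fin m))) (hXsc : Convex ℝ Xs) (hXscl : IsClosed Xs)
    (χ : EuclideanSpace ℝ (Fin m) → ℝ) (hχ : ConvexOn ℝ Set.univ χ)
    (φ : EuclideanSpace ℝ (Fin m) → ℝ) (hφd : Differentiable ℝ φ)
    (hφsc : StrongConvexOn Set.univ 1 φ)
    (x : EuclideanSpace ℝ (Fin m)) (hx : x ∈ Xs)
    (g : EuclideanSpace ℝ (Fin m)) (α δ : ℝ) (hα : 0 < α) (hδ : 0 < δ)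
    (pex : EuclideanSpace ℝ (Fin m)) (hpexXs : pex ∈ Xs)
    (hpexmin : ∀ y ∈ Xs,
      ⟪g, pex⟫ + (1 / α) * (φ pex - φ x - ⟪gradient φ x, pex - x⟫) + χ pex
        ≤ ⟪g, y⟫ + (1 / α) * (φ y - φ x - ⟪gradient φ x, y - x⟫) + χ y)
    (pδ : EuclideanSpace ℝ (Fin m)) (hpδXs : pδ ∈ Xs)
    (hpδ : ∀ u ∈ Xs,
      ⟪g + (1 / α) • (gradient φ pδ - gradient φ x), u - pδ⟫ + χ u - χ pδ ≥ -δ) :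
    ‖pex - pδ‖ ^ 2 ≤ α * δ :=
  statement18_general Xs hXsc χ hχ φ hφd hφsc x g α δ hα pex hpexXs hpexmin pδ hpδXs hpδ

end
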